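/- arXiv:2111.01771 — 3 statements merged into one kernel-verified Lean document; each statement's English description precedes it below -/
import Mathlib

section
/- Let X be an n×n matrix over a field and let s, k, i be integers with 2 ≤ s ≤ n−1, 0 ≤ k ≤ s−2 and 1 ≤ i ≤ s−1. Then det X^{[s−i+1,n−i+1]}_{[s,n]} · det X^{[s−i,n−i]}_{{s−k−1}∪[s+1,n]} = det X^{[s−i,n−i+1]}_{{s−k−1}∪[s,n]} · det X^{[s−i+1,n−i]}_{[s+1,n]} + det X^{[s−i,n−i]}_{[s,n]} · det X^{[s−i+1,n−i+1]}_{{s−k−1}∪[s+1,n]}. -/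
/-!
After renumbering, the identity is the Desnanot–Jacobi identity for
`M = X^{[s-i, n-i+1]}_{{s-k-1} ∪ [s,n]}`, deleting the first two rows and the first and last
columns of `M`. Desnanot–Jacobi is Jacobi's theorem on the `2 × 2` minors of the adjugate:
multiplying `M` by the identity matrix with columns `a, b` replaced by columns `c, d` of `adj M`
gives `M` with those columns replaced by `det M • e_c, det M • e_d`, so `det M` times the minor
of `adj M` equals `(det M)²` times a complementary minor of `M`. The factor `det M` cancels for
the generic matrix, whose determinant is a nonzero polynomial.
-/

/-- The entry of a matrix at the 1-based position `(a, b)`; equals `0` out of range. -/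
def ent {F : Type*} [Zero F] {r c : ℕ} (A : Matrix (Fin r) (Fin c) F) (a b : ℕ) : F :=
  if h : a - 1 < r ∧ b - 1 < c then A ⟨a - 1, h.1⟩ ⟨b - 1, h.2⟩ else 0

/-- The determinant of the `p × p` submatrix of `A` whose rows are the (1-based) rows
`row 0, row 1, …, row (p-1)` of `A` and whose columns are `col 0, …, col (p-1)`. -/
noncomputable def subdet {F : Type*} [Field F] {r c : ℕ} (A : Matrix (Fin r) (Fin c) F)
    (p : ℕ) (row col : ℕ → ℕ) : F :=
  (Matrix.of fun a b : Fin p => ent A (row a.val) (col b.val)).det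

namespace Matrix

variable {n R : Type*} [Fintype n] [DecidableEq n] [CommRing R]

theorem det_updateCol_single_one (A : Matrix n n R) (j i : n) :
    (A.updateCol j (Pi.single i 1)).det = adjugate A j i := by
  rw [← cramer_apply, cramer_eq_adjugate_mulVec, mulVec_single_one, col_apply]

theorem det_one_updateCol (j : n) (u : n → R) : ((1 : Matrix n n R).updateCol j u).det = u j := by
  rw [← cramer_apply, cramer_one]
  rfl

theorem det_one_updateCol_updateCol {a b : n} (hab : a ≠ b) (u v : n → R) :
    (((1 : Matrix n n R).updateCol a u).updateCol b v).det = u a * v b - u b * v a := by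
  set Q := (1 : Matrix n n R).updateCol a u
  have hQ : ∀ k, k ≠ a → (fun i => Q i k) = Pi.single k 1 := fun k hk => by
    ext i; simp [Q, updateCol_ne hk, one_apply, Pi.single_apply, eq_comm]
  have hcol : ∀ k, adjugate Q b k = if k = b then u a else if k = a then -u b else 0 := by
    intro k
    rw [← det_updateCol_single_one]
    split_ifs with hkb hka
    · rw [hkb, ← hQ b hab.symm, updateCol_eq_self, det_one_updateCol]
    · have hswap : ((Q.updateCol b (Pi.single k 1)).submatrix id (Equiv.swap a b))
          = (1 : Matrix n n R).updateCol b u := by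
        ext i j
        rcases eq_or_ne j a with rfl | hja
        · simp [Q, hka, hab, Pi.single_apply, one_apply]
        rcases eq_or_ne j b with rfl | hjb
        · simp [Q, hka, hab]
        · simp [Q, Equiv.swap_apply_of_ne_of_ne hja hjb, hja, hjb]
      have := det_permute' (Equiv.swap a b) (Q.updateCol b (Pi.single k 1))
      rw [hswap, det_one_updateCol, Equiv.Perm.sign_swap hab, Units.val_neg, Units.val_one,
        Int.cast_neg, Int.cast_one] at this
      linear_combination this
    · refine det_zero_of_column_eq hkb fun i => ?_
      rw [updateCol_ne hkb, updateCol_self]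
      exact congrFun (hQ k hka) i
  rw [← cramer_apply, cramer_eq_adjugate_mulVec, mulVec, dotProduct,
    Fintype.sum_eq_add b a hab.symm fun k hk => by rw [hcol, if_neg hk.1, if_neg hk.2, zero_mul],
    hcol, hcol, if_pos rfl, if_neg hab, if_pos rfl]
  ring

theorem det_mul_adjugate_minor_two (M : Matrix n n R) {a b : n} (hab : a ≠ b) (c d : n) :
    M.det * (adjugate M a c * adjugate M b d - adjugate M b c * adjugate M a d) =
      M.det * (M.det * ((M.updateCol a (Pi.single c 1)).updateCol b (Pi.single d 1)).det) := by
  have hadj : ∀ e, M *ᵥ (adjugate M *ᵥ Pi.single e 1) = M.det • Pi.single e 1 := fun e => by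
    rw [mulVec_mulVec, mul_adjugate, smul_mulVec, one_mulVec]
  have hprod : M * ((1 : Matrix n n R).updateCol a (adjugate M *ᵥ Pi.single c 1)).updateCol b
      (adjugate M *ᵥ Pi.single d 1) =
      (M.updateCol a (M.det • Pi.single c 1)).updateCol b (M.det • Pi.single d 1) := by
    rw [mul_updateCol, mul_updateCol, mul_one, hadj, hadj]
  have := congrArg det hprod
  rw [det_mul, det_one_updateCol_updateCol hab, det_updateCol_smul, updateCol_comm _ hab,
    det_updateCol_smul, updateCol_comm _ hab.symm] at this
  simpa [mulVec_single_one] using this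

theorem adjugate_minor_two (M : Matrix n n R) {a b : n} (hab : a ≠ b) (c d : n) :
    adjugate M a c * adjugate M b d - adjugate M b c * adjugate M a d =
      M.det * ((M.updateCol a (Pi.single c 1)).updateCol b (Pi.single d 1)).det := by
  let A := mvPolynomialX n n ℤ
  let φ := MvPolynomial.aeval (R := ℤ) fun p : n × n => M p.1 p.2
  have hφ : φ.mapMatrix A = M := mvPolynomialX_mapMatrix_aeval ℤ M
  have hA :=
    mul_left_cancel₀ (det_mvPolynomialX_ne_zero n ℤ) (det_mul_adjugate_minor_two A hab c d)
  have hupd : ∀ (B : Matrix n n (MvPolynomial (n × n) ℤ)) (j i : n),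
      (φ.mapMatrix B).updateCol j (Pi.single i 1) = φ.mapMatrix (B.updateCol j (Pi.single i 1)) :=
    fun B j i => by ext; simp [updateCol_apply, Pi.single_apply, apply_ite φ]
  rw [← hφ, hupd, hupd, ← AlgHom.map_adjugate, ← AlgHom.map_det, ← AlgHom.map_det]
  simp only [AlgHom.mapMatrix_apply, map_apply, ← map_mul, ← map_sub, hA]

theorem desnanot_jacobi {p : ℕ} (M : Matrix (Fin (p + 2)) (Fin (p + 2)) R) :
    (M.submatrix Fin.succ Fin.succ).det * (M.submatrix (Fin.succAbove 1) Fin.castSucc).det =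
      M.det * (M.submatrix (Fin.succ ∘ Fin.succ) (Fin.castSucc ∘ Fin.succ)).det +
        (M.submatrix Fin.succ Fin.castSucc).det *
          (M.submatrix (Fin.succAbove 1) Fin.succ).det := by
  have hcorner : ((M.updateCol 0 (Pi.single 0 1)).updateCol (Fin.last _) (Pi.single 1 1)).det =
      (-1) ^ p * (M.submatrix (Fin.succ ∘ Fin.succ) (Fin.castSucc ∘ Fin.succ)).det := by
    have hsub : (M.updateCol 0 (Pi.single 0 1)).submatrix (Fin.succAbove 1) Fin.castSucc =
        (M.submatrix (Fin.succAbove 1) Fin.castSucc).updateCol 0 (Pi.single 0 1) := by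
      ext i j
      rcases eq_or_ne j 0 with rfl | hj
      · simp [Pi.single_apply, Fin.succAbove_eq_zero_iff]
      · simp [updateCol_ne hj, Fin.castSucc_ne_zero_iff.mpr hj]
    rw [det_updateCol_single_one, adjugate_fin_succ_eq_det_submatrix, Fin.succAbove_last, hsub,
      det_updateCol_single_one, adjugate_fin_succ_eq_det_submatrix, submatrix_submatrix,
      Fin.succAbove_zero, show Fin.succAbove 1 ∘ Fin.succ = Fin.succ ∘ @Fin.succ p from
        funext Fin.one_succAbove_succ, Fin.val_one, Fin.val_last, Fin.val_zero]
    ring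
  have h := adjugate_minor_two M (Fin.last_pos (n := p)).ne 0 1
  simp only [adjugate_fin_succ_eq_det_submatrix, hcorner, Fin.succAbove_zero, Fin.succAbove_last,
    Fin.val_zero, Fin.val_one, Fin.val_last, pow_add, pow_one, pow_zero] at h
  refine (isUnit_neg_one.pow p).mul_left_cancel ?_
  linear_combination h

end Matrix

theorem Fin.val_one_succAbove {m : ℕ} (t : Fin (m + 1)) :
    ((1 : Fin (m + 2)).succAbove t : ℕ) = if (t : ℕ) = 0 then 0 else (t : ℕ) + 1 := by
  rcases Fin.eq_zero_or_eq_succ t with rfl | ⟨j, rfl⟩ <;> simp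

theorem subdet_eq_det_submatrix {F : Type*} [Field F] {r c p q : ℕ}
    (A : Matrix (Fin r) (Fin c) F) {row col : ℕ → ℕ} (ρ γ : ℕ → ℕ) (f g : Fin p → Fin q)
    (hf : ∀ t : Fin p, row t = ρ (f t)) (hg : ∀ t : Fin p, col t = γ (g t)) :
    subdet A p row col =
      ((Matrix.of fun a b : Fin q => ent A (ρ a) (γ b)).submatrix f g).det := by
  unfold subdet
  congr
  ext a b
  simp [hf, hg]

theorem statement6_general {F : Type*} [Field F] {n : ℕ} (X : Matrix (Fin n) (Fin n) F)
    (s k i : ℕ) :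
    subdet X (n - s + 1) (fun t => s + t) (fun t => s - i + 1 + t) *
      subdet X (n - s + 1) (fun t => if t = 0 then s - k - 1 else s + t) (fun t => s - i + t)
    = subdet X (n - s + 2) (fun t => if t = 0 then s - k - 1 else s + t - 1)
          (fun t => s - i + t) *
        subdet X (n - s) (fun t => s + 1 + t) (fun t => s - i + 1 + t)
      + subdet X (n - s + 1) (fun t => s + t) (fun t => s - i + t) *
          subdet X (n - s + 1) (fun t => if t = 0 then s - k - 1 else s + t)
            (fun t => s - i + 1 + t) := by
  set ρ : ℕ → ℕ := fun t => if t = 0 then s - k - 1 else s + t - 1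
  set γ : ℕ → ℕ := fun t => s - i + t
  -- All six minors are minors of `X^{[s-i, n-i+1]}_{{s-k-1} ∪ [s,n]}`, whose rows are `ρ` and
  -- whose columns are `γ`.
  convert Matrix.desnanot_jacobi
    (Matrix.of fun a b : Fin (n - s + 2) => ent X (ρ a) (γ b)) using 3
  all_goals first
    | rfl
    | refine subdet_eq_det_submatrix X ρ γ _ _ (fun t => ?_) (fun t => ?_) <;>
        simp only [ρ, γ, Function.comp_apply, Fin.val_succ, Fin.val_castSucc,
          Fin.val_one_succAbove] <;>
        grind

/-- The identity behind the mutation at `g_{s,s-i+1}` after the sequence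
`B_{s-k} → ⋯ → B_{s-1}`:
`det X^{[s−i+1,n−i+1]}_{[s,n]} · det X^{[s−i,n−i]}_{{s−k−1}∪[s+1,n]}
 = det X^{[s−i,n−i+1]}_{{s−k−1}∪[s,n]} · det X^{[s−i+1,n−i]}_{[s+1,n]}
 + det X^{[s−i,n−i]}_{[s,n]} · det X^{[s−i+1,n−i+1]}_{{s−k−1}∪[s+1,n]}`. -/
theorem statement6 {F : Type*} [Field F] {n : ℕ} (X : Matrix (Fin n) (Fin n) F)
    (s k i : ℕ) (hs1 : 2 ≤ s) (hs2 : s ≤ n - 1) (hk : k ≤ s - 2)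
    (hi1 : 1 ≤ i) (hi2 : i ≤ s - 1) :
    subdet X (n - s + 1) (fun t => s + t) (fun t => s - i + 1 + t) *
      subdet X (n - s + 1) (fun t => if t = 0 then s - k - 1 else s + t) (fun t => s - i + t)
    = subdet X (n - s + 2) (fun t => if t = 0 then s - k - 1 else s + t - 1)
          (fun t => s - i + t) *
        subdet X (n - s) (fun t => s + 1 + t) (fun t => s - i + 1 + t)
      + subdet X (n - s + 1) (fun t => s + t) (fun t => s - i + t) *
          subdet X (n - s + 1) (fun t => if t = 0 then s - k - 1 else s + t)
            (fun t => s - i + 1 + t) :=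
  statement6_general X s k i
end

section
/- Let Y be an n×n matrix over a field and let s, t, k be integers with s ≥ 2, t ≥ 2, k ≥ 1 and s+t+k ≤ n. Then det Y^{[n−t,n]}_{[s−1,s+t−2]∪{s+t+k}} · det Y^{[n−t+1,n]}_{[s−1,s+t−3]∪{s+t−1+k}} = det Y^{[n−t,n]}_{[s−1,s+t−3]∪[s+t−1+k,s+t+k]} · det Y^{[n−t+1,n]}_{[s−1,s+t−2]} + det Y^{[n−t,n]}_{[s−1,s+t−2]∪{s+t+k−1}} · det Y^{[n−t+1,n]}_{[s−1,s+t−3]∪{s+t+k}}. -/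
/-!
Let `v₁, …, v_{t+2}` be the rows `s - 1, …, s + t - 2, s + t + k - 1, s + t + k` of `Y`,
restricted to the columns `[n - t, n]`, and let `φ v` be the `t × t` determinant of the first
`t - 1` rows and `v`, all with the first column dropped. `φ` is linear and vanishes on
`v₁, …, v_{t-1}`. The `(t + 2) × (t + 2)` matrix with rows `(φ vᵢ, vᵢ)` is singular, so its
Laplace expansion along the first column, `∑ (-1)ⁱ φ vᵢ det(v without vᵢ) = 0`, reduces to the
three-term identity.
-/

namespace Matrix

theorem sum_neg_one_pow_mul_map_mul_det_submatrix_succAbove_eq_zero {R : Type*} [CommRing R]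
    {N : ℕ} (A : Matrix (Fin (N + 1)) (Fin N) R) (φ : (Fin N → R) →ₗ[R] R) :
    ∑ i : Fin (N + 1), (-1) ^ (i : ℕ) * φ (A i) * (A.submatrix i.succAbove id).det = 0 := by
  let A₀ : Matrix (Fin (N + 1)) (Fin (N + 1)) R := of fun i => Fin.cons 0 (A i)
  let c : Fin (N + 1) → R := Fin.cons 0 fun j => φ fun j' => if j = j' then 1 else 0
  have hcol : A₀.updateCol 0 (fun k => ∑ j, c j • A₀ k j) =
      of fun i => Fin.cons (φ (A i)) (A i) := by
    ext i l
    refine Fin.cases ?_ (fun l => ?_) l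
    · simp [A₀, c, Fin.sum_univ_succ, φ.pi_apply_eq_sum_univ (A i), mul_comm]
    · simp [A₀]
  have h := det_updateCol_sum A₀ 0 c
  rw [hcol, det_succ_column_zero, show c 0 = 0 from rfl, zero_smul] at h
  exact h

theorem map_mul_det_submatrix_succAbove_eq_add {R : Type*} [CommRing R] {q : ℕ}
    (A : Matrix (Fin (q + 3)) (Fin (q + 2)) R) (φ : (Fin (q + 2) → R) →ₗ[R] R)
    (hφ : ∀ i : Fin (q + 3), (i : ℕ) < q → φ (A i) = 0) :
    let x : Fin (q + 3) := ⟨q, by omega⟩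
    let y : Fin (q + 3) := ⟨q + 1, by omega⟩
    let z : Fin (q + 3) := ⟨q + 2, by omega⟩
    φ (A y) * (A.submatrix y.succAbove id).det =
      φ (A x) * (A.submatrix x.succAbove id).det + φ (A z) * (A.submatrix z.succAbove id).det := by
  intro x y z
  have h := sum_neg_one_pow_mul_map_mul_det_submatrix_succAbove_eq_zero A φ
  simp only [Fin.sum_univ_castSucc, Fin.val_castSucc, Fin.val_last] at h
  rw [Finset.sum_eq_zero fun i _ => by rw [hφ _ (by simp), mul_zero, zero_mul],
    show (Fin.last q).castSucc.castSucc = x from rfl, show (Fin.last (q + 1)).castSucc = y from rfl,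
    show Fin.last (q + 2) = z from rfl] at h
  have h' : (-1) ^ q * (φ (A x) * (A.submatrix x.succAbove id).det -
      φ (A y) * (A.submatrix y.succAbove id).det +
      φ (A z) * (A.submatrix z.succAbove id).det) = 0 := by
    linear_combination h
  rw [neg_one_pow_mul_eq_zero_iff] at h'
  linear_combination -h'

end Matrix

theorem Fin.val_succAbove_eq_ite {n : ℕ} (p : Fin (n + 1)) (i : Fin n) :
    (p.succAbove i : ℕ) = if (i : ℕ) < p then (i : ℕ) else i + 1 := by
  unfold Fin.succAbove
  split_ifs <;> simp_all [Fin.lt_def, Fin.val_succ]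

section

variable {F : Type*} [Field F] {r c : ℕ} (A : Matrix (Fin r) (Fin c) F)

theorem subdet_congr {p : ℕ} {row row' col col' : ℕ → ℕ} (hrow : ∀ u < p, row u = row' u)
    (hcol : ∀ u < p, col u = col' u) : subdet A p row col = subdet A p row' col' := by
  unfold subdet
  congr 1
  ext a b
  simp only [Matrix.of_apply, hrow a a.isLt, hcol b b.isLt]

open Matrix in
theorem subdet_mul_subdet_eq_add (q : ℕ) (row col : ℕ → ℕ) :
    subdet A (q + 2) (fun u => row (if u < q + 1 then u else u + 1)) col *
        subdet A (q + 1) (fun u => row (if u < q then u else q + 1)) (fun u => col (u + 1)) =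
      subdet A (q + 2) (fun u => row (if u < q then u else u + 1)) col *
          subdet A (q + 1) row (fun u => col (u + 1)) +
        subdet A (q + 2) row col *
          subdet A (q + 1) (fun u => row (if u < q then u else q + 2)) (fun u => col (u + 1)) := by
  let M : Matrix (Fin (q + 3)) (Fin (q + 2)) F := of fun i j => ent A (row i) (col j)
  let W : Matrix (Fin (q + 1)) (Fin (q + 1)) F := of fun a b => ent A (row a) (col (b + 1))
  let φ : (Fin (q + 2) → F) →ₗ[F] F :=
    ((detRowAlternating : (Fin (q + 1) → F) [⋀^Fin (q + 1)]→ₗ[F] F).toMultilinearMap.toLinearMap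
      W (Fin.last q)).comp (LinearMap.funLeft F F Fin.succ)
  have big (j : Fin (q + 3)) : (M.submatrix j.succAbove id).det =
      subdet A (q + 2) (fun u => row (if u < j then u else u + 1)) col := by
    unfold subdet
    congr 1
    ext a b
    simp [M, Fin.val_succAbove_eq_ite]
  have small (j : Fin (q + 3)) : φ (M j) =
      subdet A (q + 1) (fun u => row (if u < q then u else j)) (fun u => col (u + 1)) := by
    change (W.updateRow (Fin.last q) fun b => M j b.succ).det = _
    unfold subdet
    congr 1
    ext a b
    rcases eq_or_ne a (Fin.last q) with rfl | ha
    · simp [M]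
    · have : (a : ℕ) < q := Fin.val_lt_last ha
      simp [M, W, updateRow_ne ha, this]
  have vanish (i : Fin (q + 3)) (hi : (i : ℕ) < q) : φ (M i) = 0 := by
    rw [small, subdet]
    refine det_zero_of_row_eq (i := ⟨i, by omega⟩) (j := Fin.last q) (fun h => ?_) ?_
    · simp only [Fin.ext_iff, Fin.val_last] at h; omega
    · ext b; simp [hi]
  have key := map_mul_det_submatrix_succAbove_eq_add M φ vanish
  simp only [big, small] at key
  have hx : subdet A (q + 1) (fun u => row (if u < q then u else q)) (fun u => col (u + 1)) =
      subdet A (q + 1) row (fun u => col (u + 1)) :=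
    subdet_congr A (fun u _ => congrArg row (by split_ifs <;> omega)) fun _ _ => rfl
  have hz : subdet A (q + 2) (fun u => row (if u < q + 2 then u else u + 1)) col =
      subdet A (q + 2) row col :=
    subdet_congr A (fun _ hu => congrArg row (if_pos hu)) fun _ _ => rfl
  rw [hx, hz] at key
  linear_combination key

end

theorem statement9_general {F : Type*} [Field F] {n : ℕ} (Y : Matrix (Fin n) (Fin n) F)
    (s t k : ℕ) (ht : 2 ≤ t) :
    subdet Y (t + 1) (fun u => if u < t then s - 1 + u else s + t + k) (fun u => n - t + u) *
      subdet Y t (fun u => if u < t - 1 then s - 1 + u else s + t - 1 + k)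
        (fun u => n - t + 1 + u)
    = subdet Y (t + 1) (fun u => if u < t - 1 then s - 1 + u else s + k + u)
          (fun u => n - t + u) *
        subdet Y t (fun u => s - 1 + u) (fun u => n - t + 1 + u)
      + subdet Y (t + 1) (fun u => if u < t then s - 1 + u else s + t + k - 1)
          (fun u => n - t + u) *
        subdet Y t (fun u => if u < t - 1 then s - 1 + u else s + t + k)
          (fun u => n - t + 1 + u) := by
  obtain ⟨q, rfl⟩ : ∃ q, t = q + 1 := ⟨t - 1, by omega⟩
  -- rows `s - 1, …, s + t - 2, s + t + k - 1, s + t + k`; every minor omits one of the last three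
  have key := subdet_mul_subdet_eq_add Y q
    (fun u => if u < q + 1 then s - 1 + u else s + k + u - 1) (fun u => n - (q + 1) + u)
  refine .trans ?_ (key.trans ?_)
  all_goals first | congrm ?_ * ?_ + ?_ * ?_ | congrm ?_ * ?_
  all_goals exact subdet_congr Y (fun u hu => by split_ifs <;> omega) fun u _ => by omega

/-- Desnanot–Jacobi identity behind the mutation at `h_{s+k,n}^{(t-1)}` in the sequence
`V_{s,t}` (for `k > 0`):
`det Y^{[n−t,n]}_{[s−1,s+t−2]∪{s+t+k}} · det Y^{[n−t+1,n]}_{[s−1,s+t−3]∪{s+t−1+k}}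
 = det Y^{[n−t,n]}_{[s−1,s+t−3]∪[s+t−1+k,s+t+k]} · det Y^{[n−t+1,n]}_{[s−1,s+t−2]}
 + det Y^{[n−t,n]}_{[s−1,s+t−2]∪{s+t+k−1}} · det Y^{[n−t+1,n]}_{[s−1,s+t−3]∪{s+t+k}}`. -/
theorem statement9 {F : Type*} [Field F] {n : ℕ} (Y : Matrix (Fin n) (Fin n) F)
    (s t k : ℕ) (hs : 2 ≤ s) (ht : 2 ≤ t) (hk : 1 ≤ k) (h : s + t + k ≤ n) :
    subdet Y (t + 1) (fun u => if u < t then s - 1 + u else s + t + k) (fun u => n - t + u) *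
      subdet Y t (fun u => if u < t - 1 then s - 1 + u else s + t - 1 + k)
        (fun u => n - t + 1 + u)
    = subdet Y (t + 1) (fun u => if u < t - 1 then s - 1 + u else s + k + u)
          (fun u => n - t + u) *
        subdet Y t (fun u => s - 1 + u) (fun u => n - t + 1 + u)
      + subdet Y (t + 1) (fun u => if u < t then s - 1 + u else s + t + k - 1)
          (fun u => n - t + u) *
        subdet Y t (fun u => if u < t - 1 then s - 1 + u else s + t + k)
          (fun u => n - t + 1 + u) :=
  statement9_general Y s t k ht
end

section
/- Let X be an invertible n×n matrix and Y an n×n matrix over a field, set U = X⁻¹Y, and let k, j be integers with 1 ≤ k ≤ n−1 and 2 ≤ j ≤ n−k+1. Let M be the n×n matrix whose columns are, in order: columns 1,…,k of X, columns j+k,…,n of X, and columns n−j+2,…,n of Y. Then det M = (−1)^{(n−j−k+1)(n−k−1)} · det X · det U^{[n−j+2,n]}_{[k+1,k+j−1]}. -/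
/-!
Since `Y = X U`, the matrix `M` equals `X A`, where the columns of `A` are the unit vectors
`e₁, …, e_k, e_{j+k}, …, e_n` followed by the last `j - 1` columns of `U`. Rotating rows
`k+1, …, n` of `A` by `j - 1` places, a permutation of sign `(-1)^{(n-k-1)(j-1)}`, moves rows
`k+1, …, k+j-1` to the bottom and makes `A` block upper triangular, with an identity block and
`U^{[n-j+2,n]}_{[k+1,k+j-1]}` on the diagonal. The two signs agree since `(n-k-1)(n-k)` is even.
-/

open Matrix Equiv

lemma ent_eq_apply {F : Type*} [Zero F] {r c : ℕ} (A : Matrix (Fin r) (Fin c) F)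
    {a b : ℕ} (i : Fin r) (l : Fin c) (ha : a = i + 1) (hb : b = l + 1) :
    ent A a b = A i l := by
  subst ha hb
  simp [ent]

lemma subdet_eq_det_submatrix_s11 {F : Type*} [Field F] {r c : ℕ} (A : Matrix (Fin r) (Fin c) F)
    {p : ℕ} {row col : ℕ → ℕ} (i : Fin p → Fin r) (l : Fin p → Fin c)
    (hrow : ∀ a : Fin p, row a = i a + 1) (hcol : ∀ b : Fin p, col b = l b + 1) :
    subdet A p row col = (A.submatrix i l).det := by
  rw [subdet]
  congr 1
  ext a b
  exact ent_eq_apply A (i a) (l b) (hrow a) (hcol b)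

lemma neg_one_pow_mul_add_sub_one {R : Type*} [Monoid R] [HasDistribNeg R] (a b : ℕ) :
    (-1 : R) ^ (a * (a + b - 1)) = (-1) ^ (a * b) := by
  rcases a with _ | a
  · simp
  · have h : Even ((a + 1) * a) := Nat.even_mul_pred_self (a + 1)
    rw [show a + 1 + b - 1 = a + b by omega, mul_add, pow_add, h.neg_one_pow, one_mul]

lemma finRotate_pow_apply_val {m : ℕ} (p : ℕ) (t : Fin m) :
    ((finRotate m ^ p) t : ℕ) = (t + p) % m := by
  induction p with
  | zero => simp [Nat.mod_eq_of_lt t.isLt]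
  | succ p ih =>
    rw [pow_succ', Perm.mul_apply, finRotate_apply, Fin.val_add, ih, Fin.val_one',
      Nat.mod_add_mod, Nat.add_mod_mod, add_assoc]

def rotateTail (k m p : ℕ) : Perm (Fin (k + m)) :=
  finSumFinEquiv.permCongr (sumCongr (Equiv.refl (Fin k)) (finRotate m ^ p))

lemma rotateTail_apply_val (k m p : ℕ) (i : Fin (k + m)) :
    (rotateTail k m p i : ℕ) = if (i : ℕ) < k then (i : ℕ) else k + (i - k + p) % m := by
  induction i using Fin.addCases with
  | left a => simp [rotateTail, permCongr_apply]
  | right b => simp [rotateTail, permCongr_apply, finRotate_pow_apply_val]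

lemma sign_rotateTail (k m p : ℕ) : Perm.sign (rotateTail k m p) = (-1) ^ ((m - 1) * p) := by
  rw [rotateTail, Perm.sign_permCongr, Perm.sign_sumCongr, Perm.sign_refl, one_mul, map_pow,
    sign_finRotate, ← pow_mul]

section BlockShuffle

variable (k r q : ℕ)

def finSumFinEquivAssoc : Fin (k + r) ⊕ Fin q ≃ Fin (k + (r + q)) :=
  finSumFinEquiv.trans (finCongr (add_assoc k r q))

@[simp]
lemma finSumFinEquivAssoc_inl_val (a : Fin (k + r)) :
    (finSumFinEquivAssoc k r q (Sum.inl a) : ℕ) = a := rfl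

@[simp]
lemma finSumFinEquivAssoc_inr_val (v : Fin q) :
    (finSumFinEquivAssoc k r q (Sum.inr v) : ℕ) = k + r + v := rfl

def blockShuffle : Fin (k + r) ⊕ Fin q ≃ Fin (k + (r + q)) :=
  (finSumFinEquivAssoc k r q).trans (rotateTail k (r + q) q)

lemma blockShuffle_inl_val (a : Fin (k + r)) :
    (blockShuffle k r q (Sum.inl a) : ℕ) = if (a : ℕ) < k then (a : ℕ) else a + q := by
  rw [blockShuffle, trans_apply, rotateTail_apply_val, finSumFinEquivAssoc_inl_val]
  split_ifs
  · rfl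
  · rw [Nat.mod_eq_of_lt (by omega)]
    omega

lemma blockShuffle_inr_val (v : Fin q) : (blockShuffle k r q (Sum.inr v) : ℕ) = k + v := by
  rw [blockShuffle, trans_apply, rotateTail_apply_val, finSumFinEquivAssoc_inr_val,
    if_neg (by omega), show k + r + v - k + q = r + q + v by omega, Nat.add_mod_left,
    Nat.mod_eq_of_lt (by omega)]

lemma sign_blockShuffle :
    Perm.sign ((blockShuffle k r q).symm.trans (finSumFinEquivAssoc k r q)) =
      (-1) ^ (r * q) := by
  have h : (blockShuffle k r q).symm.trans (finSumFinEquivAssoc k r q) =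
      (rotateTail k (r + q) q).symm := by
    ext i
    simp [blockShuffle]
  rw [h, Perm.sign_symm, sign_rotateTail, mul_comm, add_comm r, neg_one_pow_mul_add_sub_one,
    mul_comm]

/-- With `r = n + 1 - j - k` and `q = j - 1`, `(fromCols X Y).submatrix id (selectCols k r q)` is
the matrix `M` of the theorem (indices here are 0-based). -/
def selectCols (b : Fin (k + (r + q))) : Fin (k + (r + q)) ⊕ Fin (k + (r + q)) :=
  if (b : ℕ) < k then Sum.inl b
  else if h : (b : ℕ) < k + r then Sum.inl ⟨b + q, by omega⟩
  else Sum.inr b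

lemma selectCols_finSumFinEquivAssoc (x : Fin (k + r) ⊕ Fin q) :
    selectCols k r q (finSumFinEquivAssoc k r q x) =
      Sum.map (blockShuffle k r q ∘ Sum.inl) (fun v => ⟨k + r + v, by omega⟩) x := by
  rcases x with a | v
  · have hx := finSumFinEquivAssoc_inl_val k r q a
    have ha := blockShuffle_inl_val k r q a
    simp only [selectCols, Sum.map_inl, Function.comp_apply]
    split_ifs
    · exact congrArg _ (Fin.ext (by rw [ha, if_pos (by omega)]; exact hx))
    · exact congrArg _ (Fin.ext (by rw [ha, if_neg (by omega), ← hx]))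
    · omega
  · have hx := finSumFinEquivAssoc_inr_val k r q v
    simp only [selectCols, Sum.map_inr]
    rw [if_neg (by omega), dif_neg (by omega)]
    exact congrArg _ (Fin.ext hx)

end BlockShuffle

namespace Matrix

variable {R : Type*} [CommRing R]

lemma det_submatrix_equiv {m n : Type*} [Fintype m] [DecidableEq m] [Fintype n] [DecidableEq n]
    (e₁ e₂ : m ≃ n) (A : Matrix n n R) :
    (A.submatrix e₁ e₂).det = Perm.sign (e₁.trans e₂.symm) * A.det := by
  rw [← det_submatrix_equiv_self e₂ A, ← det_permute]
  congr 1
  ext i j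
  simp

lemma det_fromCols_one_submatrix_sumMap {m p n n' : Type*} [Fintype m] [DecidableEq m]
    [Fintype p] [DecidableEq p] [DecidableEq n] (e : m ⊕ p ≃ n) (c : p → n')
    (U : Matrix n n' R) :
    ((fromCols (1 : Matrix n n R) U).submatrix e (Sum.map (e ∘ Sum.inl) c)).det =
      (U.submatrix (e ∘ Sum.inr) c).det := by
  have hblocks : (fromCols (1 : Matrix n n R) U).submatrix e (Sum.map (e ∘ Sum.inl) c) =
      fromBlocks 1 (U.submatrix (e ∘ Sum.inl) c) 0 (U.submatrix (e ∘ Sum.inr) c) := by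
    ext (a | a) (b | b) <;> simp [one_apply, e.injective.eq_iff]
  rw [hblocks, det_fromBlocks_zero₂₁, det_one, one_mul]

lemma det_fromCols_one_submatrix_selectCols (k r q : ℕ)
    (U : Matrix (Fin (k + (r + q))) (Fin (k + (r + q))) R) :
    ((fromCols 1 U).submatrix id (selectCols k r q)).det =
      (-1) ^ (r * q) * (U.submatrix (fun u : Fin q => ⟨k + u, by omega⟩)
        (fun v : Fin q => ⟨k + r + v, by omega⟩)).det := by
  -- reordered by `blockShuffle`, the rows make the matrix block upper triangular
  have hsel : (fromCols 1 U).submatrix id (selectCols k r q) =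
      ((fromCols 1 U).submatrix (blockShuffle k r q)
        (Sum.map (blockShuffle k r q ∘ Sum.inl) fun v : Fin q => ⟨k + r + v, by omega⟩)
        ).submatrix (blockShuffle k r q).symm (finSumFinEquivAssoc k r q).symm := by
    ext i b
    obtain ⟨x, rfl⟩ := (finSumFinEquivAssoc k r q).surjective b
    simp only [submatrix_apply, id, apply_symm_apply, symm_apply_apply,
      selectCols_finSumFinEquivAssoc]
  rw [hsel, det_submatrix_equiv, symm_symm, sign_blockShuffle,
    det_fromCols_one_submatrix_sumMap]
  push_cast
  congr 3
  ext u
  simp [blockShuffle_inr_val]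

end Matrix

theorem statement11_general {F : Type*} [Field F] {n : ℕ} (X Y : Matrix (Fin n) (Fin n) F)
    (hX : IsUnit X.det) (k j : ℕ) (hk1 : 1 ≤ k)
    (hj1 : 2 ≤ j) (hj2 : j ≤ n - k + 1) :
    (Matrix.of fun a b : Fin n =>
        if b.val < k then ent X (a.val + 1) (b.val + 1)
        else if b.val < k + (n + 1 - j - k) then ent X (a.val + 1) (j + k + (b.val - k))
        else ent Y (a.val + 1) (n - j + 2 + (b.val - (k + (n + 1 - j - k))))).det
      = (-1 : F) ^ ((n + 1 - j - k) * (n - k - 1)) * X.det *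
          subdet (X⁻¹ * Y) (j - 1) (fun u => k + 1 + u) (fun u => n - j + 2 + u) := by
  obtain ⟨q, rfl⟩ : ∃ q, j = q + 1 := ⟨j - 1, by omega⟩
  obtain ⟨r, rfl⟩ : ∃ r, n = k + (r + q) := ⟨n - k - q, by omega⟩
  have hr : k + (r + q) + 1 - (q + 1) - k = r := by omega
  have hY : fromCols X Y = X * fromCols 1 (X⁻¹ * Y) := by
    rw [mul_fromCols, Matrix.mul_one, ← Matrix.mul_assoc, mul_nonsing_inv X hX, Matrix.one_mul]
  calc _ = ((fromCols X Y).submatrix id (selectCols k r q)).det := by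
        congr 1
        ext a b
        simp only [of_apply, submatrix_apply, id, selectCols, hr]
        split_ifs
        · exact ent_eq_apply X a b rfl rfl
        · exact ent_eq_apply X a _ rfl (by simp; omega)
        · exact ent_eq_apply Y a b rfl (by omega)
    _ = X.det * ((fromCols 1 (X⁻¹ * Y)).submatrix id (selectCols k r q)).det := by
        rw [hY, ← det_mul]
        rfl
    _ = _ := by
        rw [det_fromCols_one_submatrix_selectCols, hr,
          show k + (r + q) - k - 1 = r + q - 1 by omega, neg_one_pow_mul_add_sub_one,
          Nat.add_sub_cancel, subdet_eq_det_submatrix_s11 _ (fun u => ⟨k + u, by omega⟩)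
            (fun v => ⟨k + r + v, by omega⟩) (fun _ => by simp; omega)
            (fun _ => by simp; omega)]
        ring

/-- For an invertible `X`, `U = X⁻¹Y`, `1 ≤ k ≤ n−1` and `2 ≤ j ≤ n−k+1`, the matrix `M`
whose columns are (in order) columns `1,…,k` of `X`, columns `j+k,…,n` of `X`, and columns
`n−j+2,…,n` of `Y`, satisfies
`det M = (−1)^{(n−j−k+1)(n−k−1)} · det X · det U^{[n−j+2,n]}_{[k+1,k+j−1]}`. -/
theorem statement11 {F : Type*} [Field F] {n : ℕ} (X Y : Matrix (Fin n) (Fin n) F)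
    (hX : IsUnit X.det) (k j : ℕ) (hk1 : 1 ≤ k) (hk2 : k ≤ n - 1)
    (hj1 : 2 ≤ j) (hj2 : j ≤ n - k + 1) :
    (Matrix.of fun a b : Fin n =>
        if b.val < k then ent X (a.val + 1) (b.val + 1)
        else if b.val < k + (n + 1 - j - k) then ent X (a.val + 1) (j + k + (b.val - k))
        else ent Y (a.val + 1) (n - j + 2 + (b.val - (k + (n + 1 - j - k))))).det
      = (-1 : F) ^ ((n + 1 - j - k) * (n - k - 1)) * X.det *
          subdet (X⁻¹ * Y) (j - 1) (fun u => k + 1 + u) (fun u => n - j + 2 + u) :=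
  statement11_general X Y hX k j hk1 hj1 hj2
end
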